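/- With the two-parameter construction of rotated eigenvectors in coordinates μ, ν and r² = 2/(n g(λ_μ, λ_ν)), the symmetrized KL divergence satisfies K(P₁,P₂) + K(P₂,P₁) = n g(λ_μ, λ_ν) r² for the corresponding Gaussian spiked models, where g(λ,τ) = (λ-τ)²/((1+λ)(1+τ)). -/

import Mathlib

/-! With `P j i = ⟪θ⁽¹⁾ j, θ⁽²⁾ i⟫²`, the two divergences share the diagonal term
`Σ η(λᵢ) λᵢ`, and when `P` is doubly stochastic this term can be spread over `P` from either side,
so that `K(θ⁽¹⁾, θ⁽²⁾) + K(θ⁽²⁾, θ⁽¹⁾) = (n/2) Σ P j i (η(λᵢ) - η(λⱼ)) (λᵢ - λⱼ)`, and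
`(η(λ) - η(τ)) (λ - τ) = g(λ, τ)` with `η(λ) = λ / (1 + λ)`. For a rotation in the `(μ, ν)`-plane
with sine `r`, `P` is doubly stochastic, its off-diagonal entries are `P μ ν = P ν μ = r²` and zero
elsewhere, and the diagonal does not contribute since `g(λ, λ) = 0`. -/

/-- The KL divergence formula for the multispiked Gaussian model:
`K(θ⁽¹⁾,θ⁽²⁾) = n[(1/2)Σ_ν η(λ_ν)λ_ν − (1/2)Σ_{ν,ν'} η(λ_ν)λ_{ν'} |⟨θ_{ν'}⁽¹⁾,θ_ν⁽²⁾⟩|²]`. -/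
noncomputable def spikeKL {N M : ℕ} (n : ℕ) (l : Fin M → ℝ)
    (a b : Fin M → EuclideanSpace ℝ (Fin N)) : ℝ :=
  n * ((1 / 2) * ∑ ν, (l ν / (1 + l ν)) * l ν
    - (1 / 2) * ∑ ν, ∑ ν', (l ν / (1 + l ν)) * l ν' * (inner ℝ (a ν') (b ν) : ℝ) ^ 2)

open Finset RealInnerProductSpace

theorem div_one_add_sub_div_one_add_mul_sub {x y : ℝ} (hx : 1 + x ≠ 0) (hy : 1 + y ≠ 0) :
    (x / (1 + x) - y / (1 + y)) * (x - y) = (x - y) ^ 2 / ((1 + x) * (1 + y)) := by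
  field_simp
  ring

theorem spikeKL_add_spikeKL_swap {N M : ℕ} (n : ℕ) {l : Fin M → ℝ} (hl : ∀ i, 1 + l i ≠ 0)
    {a b : Fin M → EuclideanSpace ℝ (Fin N)} (hcol : ∀ i, ∑ j, ⟪a j, b i⟫ ^ 2 = 1)
    (hrow : ∀ j, ∑ i, ⟪a j, b i⟫ ^ 2 = 1) :
    spikeKL n l a b + spikeKL n l b a =
      n / 2 * ∑ i, ∑ j, (l i - l j) ^ 2 / ((1 + l i) * (1 + l j)) * ⟪a j, b i⟫ ^ 2 := by
  rw [spikeKL, spikeKL]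
  obtain ⟨η, hη⟩ : ∃ η : Fin M → ℝ, ∀ i, l i / (1 + l i) = η i := ⟨_, fun _ => rfl⟩
  simp only [hη]
  have hdiag_col : ∑ i, ∑ j, η i * l i * ⟪a j, b i⟫ ^ 2 = ∑ i, η i * l i := by
    simp only [← mul_sum, hcol, mul_one]
  have hdiag_row : ∑ i, ∑ j, η j * l j * ⟪a j, b i⟫ ^ 2 = ∑ i, η i * l i := by
    rw [sum_comm]
    simp only [← mul_sum, hrow, mul_one]
  have hswap : ∑ i, ∑ j, η i * l j * ⟪b j, a i⟫ ^ 2 = ∑ i, ∑ j, η j * l i * ⟪a j, b i⟫ ^ 2 := by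
    rw [sum_comm]
    simp only [real_inner_comm]
  have hexpand : ∀ i j, (l i - l j) ^ 2 / ((1 + l i) * (1 + l j)) * ⟪a j, b i⟫ ^ 2 =
      (η i * l i + η j * l j - η i * l j - η j * l i) * ⟪a j, b i⟫ ^ 2 := by
    intro i j
    rw [← div_one_add_sub_div_one_add_mul_sub (hl i) (hl j), hη, hη]
    ring
  simp only [hswap, hexpand]
  simp only [add_mul, sub_mul, sum_sub_distrib, sum_add_distrib]
  rw [hdiag_col, hdiag_row]
  ring

section PlaneRotation

variable {E ι : Type*} [NormedAddCommGroup E] [InnerProductSpace ℝ E] [DecidableEq ι]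

def planeRotation (e : ι → E) (μ ν : ι) (c s : ℝ) (i : ι) : E :=
  if i = ν then c • e ν + s • e μ
  else if i = μ then (-s) • e ν + c • e μ
  else e i

variable {e : ι → E} {μ ν : ι}

theorem inner_planeRotation (he : Orthonormal ℝ e) (hμν : μ ≠ ν) (c s : ℝ) (i j : ι) :
    ⟪e j, planeRotation e μ ν c s i⟫ =
      if i = ν then (if j = ν then c else 0) + (if j = μ then s else 0)
      else if i = μ then (if j = ν then -s else 0) + (if j = μ then c else 0)
      else if j = i then 1 else 0 := by
  rw [orthonormal_iff_ite] at he
  by_cases hν : i = ν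
  · simp [planeRotation, hν, inner_add_right, real_inner_smul_right, he, eq_comm]
  by_cases hμ : i = μ
  · simp [planeRotation, hμ, hμν, inner_add_right, real_inner_smul_right, he, eq_comm,
      neg_ite]
  · simp [planeRotation, hν, hμ, he]

theorem inner_planeRotation_comm (he : Orthonormal ℝ e) (hμν : μ ≠ ν) (c s : ℝ) (i j : ι) :
    ⟪e j, planeRotation e μ ν c s i⟫ = ⟪e i, planeRotation e μ ν c (-s) j⟫ := by
  rw [inner_planeRotation he hμν, inner_planeRotation he hμν]
  split_ifs <;> grind

theorem sum_sq_inner_planeRotation_column [Fintype ι] (he : Orthonormal ℝ e) (hμν : μ ≠ ν)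
    {c s : ℝ} (hcs : c ^ 2 + s ^ 2 = 1) (i : ι) :
    ∑ j, ⟪e j, planeRotation e μ ν c s i⟫ ^ 2 = 1 := by
  simp only [inner_planeRotation he hμν]
  split_ifs with hν hμ
  · rw [Fintype.sum_eq_add ν μ hμν.symm (by aesop)]
    simp [hμν, hμν.symm, hcs]
  · rw [Fintype.sum_eq_add ν μ hμν.symm (by aesop)]
    simp [hμν, hμν.symm]
    linarith
  · rw [Fintype.sum_eq_single i (by aesop)]
    simp

theorem sum_sq_inner_planeRotation_row [Fintype ι] (he : Orthonormal ℝ e) (hμν : μ ≠ ν)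
    {c s : ℝ} (hcs : c ^ 2 + s ^ 2 = 1) (j : ι) :
    ∑ i, ⟪e j, planeRotation e μ ν c s i⟫ ^ 2 = 1 := by
  simp_rw [inner_planeRotation_comm he hμν c s _ j]
  exact sum_sq_inner_planeRotation_column he hμν (by rwa [neg_sq]) j

theorem sum_sum_mul_sq_inner_planeRotation [Fintype ι] (he : Orthonormal ℝ e) (hμν : μ ≠ ν)
    (c s : ℝ) {f : ι → ι → ℝ} (hf : ∀ i, f i i = 0) :
    ∑ i, ∑ j, f i j * ⟪e j, planeRotation e μ ν c s i⟫ ^ 2 = s ^ 2 * (f ν μ + f μ ν) := by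
  simp only [inner_planeRotation he hμν]
  rw [Fintype.sum_eq_add ν μ hμν.symm]
  · rw [Fintype.sum_eq_add ν μ hμν.symm (by aesop), Fintype.sum_eq_add ν μ hμν.symm (by aesop)]
    simp [hμν, hμν.symm, hf]
    ring
  · intro i ⟨hν, hμ⟩
    rw [Fintype.sum_eq_single i (by aesop)]
    simp [hν, hμ, hf]

end PlaneRotation

theorem symmetrized_kl_two_point_general (n N M : ℕ) (hMN : M ≤ N)
    (l : Fin M → ℝ) (hl : ∀ i, 0 < l i) (μ ν : Fin M) (hμν : μ ≠ ν)
    (r : ℝ) (hr0 : 0 < r) (hr1 : r < 1) :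
    let e : Fin M → EuclideanSpace ℝ (Fin N) :=
      fun i => EuclideanSpace.single (Fin.castLE hMN i) (1 : ℝ)
    let θ₁ : Fin M → EuclideanSpace ℝ (Fin N) := e
    let θ₂ : Fin M → EuclideanSpace ℝ (Fin N) := fun i =>
      if i = ν then Real.sqrt (1 - r ^ 2) • e ν + r • e μ
      else if i = μ then (-r) • e ν + Real.sqrt (1 - r ^ 2) • e μ
      else e i
    spikeKL n l θ₁ θ₂ + spikeKL n l θ₂ θ₁
      = n * ((l μ - l ν) ^ 2 / ((1 + l μ) * (1 + l ν))) * r ^ 2 := by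
  intro e θ₁ θ₂
  have he : Orthonormal ℝ e :=
    EuclideanSpace.orthonormal_single.comp _ (Fin.castLE_injective hMN)
  have hθ₂ : θ₂ = planeRotation e μ ν √(1 - r ^ 2) r := rfl
  have hcs : √(1 - r ^ 2) ^ 2 + r ^ 2 = 1 := by
    rw [Real.sq_sqrt (by nlinarith)]
    ring
  have hl' : ∀ i, 1 + l i ≠ 0 := fun i => by linarith [hl i]
  rw [hθ₂, spikeKL_add_spikeKL_swap n hl' (sum_sq_inner_planeRotation_column he hμν hcs)
    (sum_sq_inner_planeRotation_row he hμν hcs),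
    sum_sum_mul_sq_inner_planeRotation he hμν _ _ (by simp)]
  ring

theorem symmetrized_kl_two_point (n N M : ℕ) (hn : 0 < n) (hMN : M ≤ N)
    (l : Fin M → ℝ) (hl : ∀ i, 0 < l i) (μ ν : Fin M) (hμν : μ ≠ ν)
    (r : ℝ) (hr0 : 0 < r) (hr1 : r < 1)
    (hr2 : r ^ 2 = 2 / (n * ((l μ - l ν) ^ 2 / ((1 + l μ) * (1 + l ν))))) :
    let e : Fin M → EuclideanSpace ℝ (Fin N) :=
      fun i => EuclideanSpace.single (Fin.castLE hMN i) (1 : ℝ)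
    let θ₁ : Fin M → EuclideanSpace ℝ (Fin N) := e
    let θ₂ : Fin M → EuclideanSpace ℝ (Fin N) := fun i =>
      if i = ν then Real.sqrt (1 - r ^ 2) • e ν + r • e μ
      else if i = μ then (-r) • e ν + Real.sqrt (1 - r ^ 2) • e μ
      else e i
    spikeKL n l θ₁ θ₂ + spikeKL n l θ₂ θ₁
      = n * ((l μ - l ν) ^ 2 / ((1 + l μ) * (1 + l ν))) * r ^ 2 :=
  symmetrized_kl_two_point_general n N M hMN l hl μ ν hμν r hr0 hr1
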